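/- arXiv:1011.2796 — 5 statements merged into one kernel-verified Lean document; each statement's English description precedes it below -/
import Mathlib

section
/- Let n ≥ 1 and let D ⊆ ℝⁿ × (0,∞) be open. Suppose u is a smooth solution of the heat equation ∂ₜu = Δu on D. Define D* = {(y,s) ∈ ℝⁿ × (0,∞) : (y/s, 1/s) ∈ D} and v(y,s) = (4π/s)^{n/2} · e^{|y|²/(4s)} · u(y/s, 1/s) for (y,s) ∈ D*. Then v is a smooth solution of the backward heat equation ∂ₛv + Δv = 0 on D* (Appell transformation). -/
open Real Set Filter

/-- The Laplacian of `f` at `x`, computed as the sum of the second partial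
derivatives in the coordinate directions. -/
noncomputable def lap {n : ℕ} (f : EuclideanSpace ℝ (Fin n) → ℝ)
    (x : EuclideanSpace ℝ (Fin n)) : ℝ :=
  ∑ i, fderiv ℝ (fun y => fderiv ℝ f y (EuclideanSpace.single i 1)) x
      (EuclideanSpace.single i 1)

section Aux

variable {n : ℕ}

local notation "E" => EuclideanSpace ℝ (Fin n)

/-- Partial derivative in the time direction as a full Fréchet derivative. -/
lemma aux_slice_deriv (f : E × ℝ → ℝ) (p : E × ℝ)
    (hf : DifferentiableAt ℝ f p) :
    deriv (fun t => f (p.1, t)) p.2 = fderiv ℝ f p ((0 : E), (1:ℝ)) := by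
  have hc : HasDerivAt (fun t : ℝ => ((p.1 : E), t)) ((0 : E), (1:ℝ)) p.2 :=
    (hasDerivAt_const _ _).prodMk (hasDerivAt_id _)
  have := hf.hasFDerivAt.comp_hasDerivAt p.2 (by simpa using hc)
  simpa [Function.comp_def] using this.deriv

/-- Second partial derivative in a space direction as iterated full Fréchet
derivatives. -/
lemma aux_slice_lap2 (f : E × ℝ → ℝ) (O : Set (E × ℝ)) (hO : IsOpen O)
    (hf : ContDiffOn ℝ (⊤ : ℕ∞) f O) (p : E × ℝ) (hp : p ∈ O) (w : E) :
    fderiv ℝ (fun z => fderiv ℝ (fun x => f (x, p.2)) z w) p.1 w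
      = fderiv ℝ (fun q => fderiv ℝ f q (w, (0:ℝ))) p (w, (0:ℝ)) := by
  have hdiff : ∀ q ∈ O, DifferentiableAt ℝ f q := fun q hq =>
    (hf.contDiffAt (hO.mem_nhds hq)).differentiableAt (by simp)
  set J : E →L[ℝ] E × ℝ := (ContinuousLinearMap.id ℝ E).prod (0 : E →L[ℝ] ℝ) with hJ
  have hι : ∀ z : E, HasFDerivAt (fun x : E => (x, p.2)) J z := fun z =>
    (hasFDerivAt_id z).prodMk (hasFDerivAt_const p.2 z)
  have hS : {z : E | (z, p.2) ∈ O} ∈ nhds p.1 := by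
    have : Continuous (fun z : E => (z, p.2)) := by fun_prop
    exact (hO.preimage this).mem_nhds (by simpa using hp)
  have hev : (fun z => fderiv ℝ (fun x => f (x, p.2)) z w)
      =ᶠ[nhds p.1] (fun z => fderiv ℝ f (z, p.2) (w, (0:ℝ))) := by
    filter_upwards [hS] with z hz
    have h1 : HasFDerivAt (fun x : E => f (x, p.2))
        ((fderiv ℝ f (z, p.2)).comp J) z :=
      ((hdiff _ hz).hasFDerivAt).comp z (hι z)
    rw [h1.fderiv]
    simp [hJ]
  rw [hev.fderiv_eq]
  have hC2 : ContDiffAt ℝ (⊤ : ℕ∞) (fderiv ℝ f) p :=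
    (hf.contDiffAt (hO.mem_nhds hp)).fderiv_right (by simp)
  have hg : DifferentiableAt ℝ (fun q => fderiv ℝ f q (w, (0:ℝ))) p :=
    (hC2.clm_apply contDiffAt_const).differentiableAt (by simp)
  have h2 : HasFDerivAt (fun z : E => fderiv ℝ f (z, p.2) (w, (0:ℝ)))
      ((fderiv ℝ (fun q => fderiv ℝ f q (w, (0:ℝ))) p).comp J) p.1 := by
    have := hg.hasFDerivAt.comp p.1 (by simpa using hι p.1)
    simpa [Function.comp_def] using this
  rw [h2.fderiv]
  simp [hJ]

/-- First space partial of the Appell-transformed function. -/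
lemma aux_claim1 (U : E × ℝ → ℝ) (D : Set (E × ℝ)) (hD : IsOpen D)
    (hu : ContDiffOn ℝ (⊤ : ℕ∞) U D) (s : ℝ) (C : ℝ)
    (z : E) (hz : ((s⁻¹ • z : E), s⁻¹) ∈ D) (i : Fin n) :
    fderiv ℝ (fun z' : E => C * Real.exp ((4*s)⁻¹ * (inner ℝ z' z' : ℝ)) * U (s⁻¹ • z', s⁻¹)) z
      (EuclideanSpace.single i 1)
      = C * Real.exp ((4*s)⁻¹ * (inner ℝ z z : ℝ)) *
        ((2*s)⁻¹ * z i * U (s⁻¹ • z, s⁻¹)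
          + s⁻¹ * fderiv ℝ U ((s⁻¹ • z : E), s⁻¹) ((EuclideanSpace.single i 1 : E), (0:ℝ))) := by
  have hinner : HasFDerivAt (fun z : E => (inner ℝ z z : ℝ))
      ((fderivInnerCLM ℝ (z,z)).comp ((ContinuousLinearMap.id ℝ E).prod (ContinuousLinearMap.id ℝ E))) z :=
    (hasFDerivAt_id z).inner ℝ (hasFDerivAt_id z)
  have hr := hinner.const_mul ((4*s)⁻¹)
  have hexp := hr.exp
  have hψ : HasFDerivAt (fun z : E => ((s⁻¹ • z : E), s⁻¹))
      ((s⁻¹ • ContinuousLinearMap.id ℝ E).prod (0 : E →L[ℝ] ℝ)) z :=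
    ((hasFDerivAt_id z).const_smul s⁻¹).prodMk (hasFDerivAt_const _ _)
  have hU := ((hu.contDiffAt (hD.mem_nhds hz)).differentiableAt (by simp)).hasFDerivAt
  have hw := hU.comp z hψ
  have hmul := (hexp.mul hw).const_mul C
  have hfd := hmul.fderiv
  simp only [Function.comp_def, Pi.mul_def] at hfd
  have hfun : (fun z' : E => C * Real.exp ((4*s)⁻¹ * (inner ℝ z' z' : ℝ)) * U (s⁻¹ • z', s⁻¹))
      = (fun z' : E => C * (Real.exp ((4*s)⁻¹ * (inner ℝ z' z' : ℝ)) * U (s⁻¹ • z', s⁻¹))) :=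
    funext fun _ => mul_assoc _ _ _
  rw [hfun, hfd]
  have hsm : ((s⁻¹ • EuclideanSpace.single i 1 : E), (0:ℝ))
      = s⁻¹ • ((EuclideanSpace.single i 1 : E), (0:ℝ)) := by
    simp [Prod.smul_mk]
  simp only [ContinuousLinearMap.add_apply, ContinuousLinearMap.smul_apply,
    ContinuousLinearMap.comp_apply, ContinuousLinearMap.prod_apply,
    ContinuousLinearMap.coe_id', id_eq, fderivInnerCLM_apply,
    ContinuousLinearMap.coe_smul', Pi.smul_apply, ContinuousLinearMap.zero_apply,
    hsm, map_smul]
  simp only [EuclideanSpace.inner_single_left, EuclideanSpace.inner_single_right,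
    smul_eq_mul, starRingEnd_apply, star_trivial, mul_one, one_mul]
  ring

/-- Second space partial of the Appell-transformed function. -/
lemma aux_claim2 (U : E × ℝ → ℝ) (D : Set (E × ℝ)) (hD : IsOpen D)
    (hu : ContDiffOn ℝ (⊤ : ℕ∞) U D) (s : ℝ) (C : ℝ)
    (y : E) (hy : ((s⁻¹ • y : E), s⁻¹) ∈ D) (i : Fin n) :
    fderiv ℝ (fun z : E => C * Real.exp ((4*s)⁻¹ * (inner ℝ z z : ℝ)) *
        ((2*s)⁻¹ * z i * U (s⁻¹ • z, s⁻¹)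
          + s⁻¹ * fderiv ℝ U ((s⁻¹ • z : E), s⁻¹) ((EuclideanSpace.single i 1 : E), (0:ℝ)))) y
      (EuclideanSpace.single i 1)
      = C * Real.exp ((4*s)⁻¹ * (inner ℝ y y : ℝ)) *
        ( ((2*s)⁻¹ + ((2*s)⁻¹ * y i) * ((2*s)⁻¹ * y i)) * U (s⁻¹ • y, s⁻¹)
          + (s⁻¹ * (s⁻¹ * y i)) * fderiv ℝ U ((s⁻¹ • y : E), s⁻¹) ((EuclideanSpace.single i 1 : E), (0:ℝ))
          + s⁻¹ * s⁻¹ * fderiv ℝ (fun p => fderiv ℝ U p ((EuclideanSpace.single i 1 : E), (0:ℝ)))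
              ((s⁻¹ • y : E), s⁻¹) ((EuclideanSpace.single i 1 : E), (0:ℝ)) ) := by
  have hinner : HasFDerivAt (fun z : E => (inner ℝ z z : ℝ))
      ((fderivInnerCLM ℝ (y,y)).comp ((ContinuousLinearMap.id ℝ E).prod (ContinuousLinearMap.id ℝ E))) y :=
    (hasFDerivAt_id y).inner ℝ (hasFDerivAt_id y)
  have hr := hinner.const_mul ((4*s)⁻¹)
  have hexp := hr.exp
  have hψ : HasFDerivAt (fun z : E => ((s⁻¹ • z : E), s⁻¹))
      ((s⁻¹ • ContinuousLinearMap.id ℝ E).prod (0 : E →L[ℝ] ℝ)) y :=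
    ((hasFDerivAt_id y).const_smul s⁻¹).prodMk (hasFDerivAt_const _ _)
  have hUc : ContDiffAt ℝ (⊤ : ℕ∞) U ((s⁻¹ • y : E), s⁻¹) := hu.contDiffAt (hD.mem_nhds hy)
  have hU := (hUc.differentiableAt (by simp)).hasFDerivAt
  have hw := hU.comp y hψ
  have hzi : HasFDerivAt (fun z : E => z i) (EuclideanSpace.proj (𝕜 := ℝ) i) y :=
    (EuclideanSpace.proj (𝕜 := ℝ) i).hasFDerivAt
  have hBd : DifferentiableAt ℝ (fun p : E × ℝ =>
      fderiv ℝ U p ((EuclideanSpace.single i 1 : E), (0:ℝ))) ((s⁻¹ • y : E), s⁻¹) :=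
    ((hUc.fderiv_right (m := 1) (by exact WithTop.coe_le_coe.mpr le_top)).clm_apply contDiffAt_const).differentiableAt (by simp)
  have hB := hBd.hasFDerivAt.comp y hψ
  have h1 := ((hzi.const_mul ((2*s)⁻¹)).mul hw).add (hB.const_mul s⁻¹)
  have hmul := (hexp.mul h1).const_mul C
  have hfd := hmul.fderiv
  simp only [Function.comp_def, Pi.mul_def, Pi.add_def] at hfd
  have hfun : (fun z : E => C * Real.exp ((4*s)⁻¹ * (inner ℝ z z : ℝ)) *
        ((2*s)⁻¹ * z i * U (s⁻¹ • z, s⁻¹)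
          + s⁻¹ * fderiv ℝ U ((s⁻¹ • z : E), s⁻¹) ((EuclideanSpace.single i 1 : E), (0:ℝ))))
      = (fun z : E => C * (Real.exp ((4*s)⁻¹ * (inner ℝ z z : ℝ)) *
        ((2*s)⁻¹ * z i * U (s⁻¹ • z, s⁻¹)
          + s⁻¹ * fderiv ℝ U ((s⁻¹ • z : E), s⁻¹) ((EuclideanSpace.single i 1 : E), (0:ℝ))))) :=
    funext fun _ => mul_assoc _ _ _
  rw [hfun, hfd]
  have hsm : ((s⁻¹ • EuclideanSpace.single i 1 : E), (0:ℝ))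
      = s⁻¹ • ((EuclideanSpace.single i 1 : E), (0:ℝ)) := by
    simp [Prod.smul_mk]
  simp only [ContinuousLinearMap.add_apply, ContinuousLinearMap.smul_apply,
    ContinuousLinearMap.comp_apply, ContinuousLinearMap.prod_apply,
    ContinuousLinearMap.coe_id', id_eq, fderivInnerCLM_apply,
    ContinuousLinearMap.coe_smul', Pi.smul_apply, ContinuousLinearMap.zero_apply,
    hsm, map_smul, PiLp.proj_apply]
  simp only [EuclideanSpace.inner_single_left, EuclideanSpace.inner_single_right,
    smul_eq_mul, starRingEnd_apply, star_trivial, mul_one, one_mul,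
    EuclideanSpace.single_apply, if_pos rfl, if_true]
  ring

/-- Reconstruction of a vector from its coordinates. -/
lemma aux_sum_single (x : E) : ∑ i, x i • (EuclideanSpace.single i (1:ℝ)) = x := by
  ext j
  have : (∑ i, x i • EuclideanSpace.single i (1:ℝ)) j
      = ∑ i, (x i • EuclideanSpace.single i (1:ℝ)) j :=
    by rw [WithLp.ofLp_sum]; exact Finset.sum_apply j Finset.univ _
  rw [this]
  simp [EuclideanSpace.single_apply]

end Aux

/-- The Appell transformation: if `u` solves the heat equation `∂ₜu = Δu` on an
open set `D ⊆ ℝⁿ × (0,∞)`, then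
`v(y,s) = (4π/s)^{n/2} e^{|y|²/(4s)} u(y/s, 1/s)` solves the backward heat
equation `∂ₛv + Δv = 0` on `D* = {(y,s) : s > 0, (y/s, 1/s) ∈ D}`. -/
theorem appell_transformation (n : ℕ) (hn : 1 ≤ n)
    (D : Set (EuclideanSpace ℝ (Fin n) × ℝ)) (hD : IsOpen D)
    (hDpos : ∀ p ∈ D, 0 < p.2)
    (u : EuclideanSpace ℝ (Fin n) → ℝ → ℝ)
    (hu : ContDiffOn ℝ (⊤ : ℕ∞) (fun p : EuclideanSpace ℝ (Fin n) × ℝ => u p.1 p.2) D)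
    (heat : ∀ x t, (x, t) ∈ D → deriv (u x) t = lap (fun y => u y t) x)
    (v : EuclideanSpace ℝ (Fin n) → ℝ → ℝ)
    (hv : ∀ y s, v y s =
      (4 * π / s) ^ ((n : ℝ) / 2) * Real.exp (‖y‖ ^ 2 / (4 * s)) * u (s⁻¹ • y) s⁻¹)
    (Dstar : Set (EuclideanSpace ℝ (Fin n) × ℝ))
    (hDstar : Dstar = {p | 0 < p.2 ∧ (p.2⁻¹ • p.1, p.2⁻¹) ∈ D}) :
    ContDiffOn ℝ (⊤ : ℕ∞) (fun p : EuclideanSpace ℝ (Fin n) × ℝ => v p.1 p.2) Dstar ∧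
      ∀ y s, (y, s) ∈ Dstar → deriv (v y) s + lap (fun z => v z s) y = 0 := by
  constructor
  · -- Smoothness
    intro p hp
    rw [hDstar] at hp
    obtain ⟨hps, hpD⟩ := hp
    apply ContDiffAt.contDiffWithinAt
    have hvf : (fun p : EuclideanSpace ℝ (Fin n) × ℝ => v p.1 p.2)
        = fun p : EuclideanSpace ℝ (Fin n) × ℝ =>
          (4 * π / p.2) ^ ((n : ℝ) / 2) * Real.exp (‖p.1‖ ^ 2 / (4 * p.2))
            * u (p.2⁻¹ • p.1) p.2⁻¹ := funext fun p => hv p.1 p.2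
    rw [hvf]
    have hs : p.2 ≠ 0 := ne_of_gt hps
    have hbase : (0:ℝ) < 4 * π / p.2 := by positivity
    have h1 : ContDiffAt ℝ (⊤ : ℕ∞) (fun q : EuclideanSpace ℝ (Fin n) × ℝ =>
        (4 * π / q.2) ^ ((n:ℝ)/2)) p :=
      (contDiffAt_const.div contDiffAt_snd hs).rpow_const_of_ne (ne_of_gt hbase)
    have h2 : ContDiffAt ℝ (⊤ : ℕ∞) (fun q : EuclideanSpace ℝ (Fin n) × ℝ =>
        Real.exp (‖q.1‖ ^ 2 / (4 * q.2))) p := by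
      have hnum : ContDiffAt ℝ (⊤ : ℕ∞) (fun q : EuclideanSpace ℝ (Fin n) × ℝ => ‖q.1‖ ^ 2) p :=
        contDiffAt_fst.norm_sq ℝ
      have hden : ContDiffAt ℝ (⊤ : ℕ∞) (fun q : EuclideanSpace ℝ (Fin n) × ℝ => 4 * q.2) p :=
        contDiffAt_const.mul contDiffAt_snd
      exact (hnum.div hden (by positivity)).exp
    have hψc : ContDiffAt ℝ (⊤ : ℕ∞) (fun q : EuclideanSpace ℝ (Fin n) × ℝ =>
        ((q.2⁻¹ • q.1 : EuclideanSpace ℝ (Fin n)), q.2⁻¹)) p :=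
      ((contDiffAt_snd.inv hs).smul contDiffAt_fst).prodMk (contDiffAt_snd.inv hs)
    have h3 : ContDiffAt ℝ (⊤ : ℕ∞) (fun q : EuclideanSpace ℝ (Fin n) × ℝ =>
        u (q.2⁻¹ • q.1) q.2⁻¹) p :=
      by have := (hu.contDiffAt (hD.mem_nhds hpD)).comp p hψc; exact this
    exact (h1.mul h2).mul h3
  · -- The backward heat equation
    intro y s hys
    rw [hDstar] at hys
    obtain ⟨hs0, hq⟩ := hys
    simp only at hs0 hq
    have hs : s ≠ 0 := ne_of_gt hs0
    -- Notation
    let U : EuclideanSpace ℝ (Fin n) × ℝ → ℝ := fun p => u p.1 p.2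
    have hUD : ContDiffOn ℝ (⊤ : ℕ∞) U D := hu
    have hq' : ((s⁻¹ • y : EuclideanSpace ℝ (Fin n)), s⁻¹) ∈ D := hq
    have hUdiff : DifferentiableAt ℝ U ((s⁻¹ • y : EuclideanSpace ℝ (Fin n)), s⁻¹) :=
      (hUD.contDiffAt (hD.mem_nhds hq')).differentiableAt (by simp)
    -- The heat equation, translated into full Fréchet derivatives
    have hheat : fderiv ℝ U ((s⁻¹ • y : EuclideanSpace ℝ (Fin n)), s⁻¹)
        ((0 : EuclideanSpace ℝ (Fin n)), (1:ℝ))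
        = ∑ i, fderiv ℝ (fun p => fderiv ℝ U p
            ((EuclideanSpace.single i 1 : EuclideanSpace ℝ (Fin n)), (0:ℝ)))
          ((s⁻¹ • y : EuclideanSpace ℝ (Fin n)), s⁻¹)
          ((EuclideanSpace.single i 1 : EuclideanSpace ℝ (Fin n)), (0:ℝ)) := by
      have h1 := aux_slice_deriv U ((s⁻¹ • y : EuclideanSpace ℝ (Fin n)), s⁻¹) hUdiff
      have h2 : lap (fun x => u x s⁻¹) (s⁻¹ • y)
          = ∑ i, fderiv ℝ (fun p => fderiv ℝ U p
              ((EuclideanSpace.single i 1 : EuclideanSpace ℝ (Fin n)), (0:ℝ)))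
            ((s⁻¹ • y : EuclideanSpace ℝ (Fin n)), s⁻¹)
            ((EuclideanSpace.single i 1 : EuclideanSpace ℝ (Fin n)), (0:ℝ)) := by
        unfold lap
        exact Finset.sum_congr rfl fun i _ =>
          aux_slice_lap2 U D hD hUD ((s⁻¹ • y : EuclideanSpace ℝ (Fin n)), s⁻¹) hq'
            (EuclideanSpace.single i 1)
      rw [← h1, ← h2]
      exact heat _ _ hq'
    -- Laplacian of v in the space variable
    have hvs : (fun z => v z s) = (fun z : EuclideanSpace ℝ (Fin n) =>
        (4 * π / s) ^ ((n : ℝ) / 2) * Real.exp ((4*s)⁻¹ * (inner ℝ z z : ℝ))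
          * U ((s⁻¹ • z : EuclideanSpace ℝ (Fin n)), s⁻¹)) := by
      funext z
      rw [hv z s, real_inner_self_eq_norm_sq, inv_mul_eq_div]
    have hΩ : {z : EuclideanSpace ℝ (Fin n) |
        ((s⁻¹ • z : EuclideanSpace ℝ (Fin n)), s⁻¹) ∈ D} ∈ nhds y := by
      have hcont : Continuous (fun z : EuclideanSpace ℝ (Fin n) =>
          ((s⁻¹ • z : EuclideanSpace ℝ (Fin n)), s⁻¹)) := by fun_prop
      exact (hD.preimage hcont).mem_nhds hq'
    have hlap : lap (fun z => v z s) y = ∑ i,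
        ((4 * π / s) ^ ((n : ℝ) / 2) * Real.exp ((4*s)⁻¹ * (inner ℝ y y : ℝ)) *
          ( ((2*s)⁻¹ + ((2*s)⁻¹ * y i) * ((2*s)⁻¹ * y i)) *
              U ((s⁻¹ • y : EuclideanSpace ℝ (Fin n)), s⁻¹)
            + (s⁻¹ * (s⁻¹ * y i)) * fderiv ℝ U ((s⁻¹ • y : EuclideanSpace ℝ (Fin n)), s⁻¹)
                ((EuclideanSpace.single i 1 : EuclideanSpace ℝ (Fin n)), (0:ℝ))
            + s⁻¹ * s⁻¹ * fderiv ℝ (fun p => fderiv ℝ U p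
                  ((EuclideanSpace.single i 1 : EuclideanSpace ℝ (Fin n)), (0:ℝ)))
                ((s⁻¹ • y : EuclideanSpace ℝ (Fin n)), s⁻¹)
                ((EuclideanSpace.single i 1 : EuclideanSpace ℝ (Fin n)), (0:ℝ)) )) := by
      unfold lap
      rw [hvs]
      refine Finset.sum_congr rfl fun i _ => ?_
      have hev : (fun z : EuclideanSpace ℝ (Fin n) => fderiv ℝ
            (fun z' : EuclideanSpace ℝ (Fin n) => (4 * π / s) ^ ((n : ℝ) / 2)
              * Real.exp ((4*s)⁻¹ * (inner ℝ z' z' : ℝ))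
              * U ((s⁻¹ • z' : EuclideanSpace ℝ (Fin n)), s⁻¹)) z (EuclideanSpace.single i 1))
          =ᶠ[nhds y] (fun z : EuclideanSpace ℝ (Fin n) =>
            (4 * π / s) ^ ((n : ℝ) / 2) * Real.exp ((4*s)⁻¹ * (inner ℝ z z : ℝ)) *
              ((2*s)⁻¹ * z i * U ((s⁻¹ • z : EuclideanSpace ℝ (Fin n)), s⁻¹)
                + s⁻¹ * fderiv ℝ U ((s⁻¹ • z : EuclideanSpace ℝ (Fin n)), s⁻¹)
                    ((EuclideanSpace.single i 1 : EuclideanSpace ℝ (Fin n)), (0:ℝ)))) := by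
        filter_upwards [hΩ] with z hz
        exact aux_claim1 U D hD hUD s _ z hz i
      rw [hev.fderiv_eq]
      exact aux_claim2 U D hD hUD s _ y hq' i
    -- Time derivative of v
    have hvy : v y = fun s' : ℝ => (4 * π / s') ^ ((n:ℝ)/2)
        * Real.exp ((4*s')⁻¹ * (inner ℝ y y : ℝ))
        * U ((s'⁻¹ • y : EuclideanSpace ℝ (Fin n)), s'⁻¹) := by
      funext s'
      rw [hv y s', real_inner_self_eq_norm_sq, inv_mul_eq_div]
    have hbase : (0:ℝ) < 4 * π / s := by positivity
    have h4s : (4:ℝ) * s ≠ 0 := by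
      simp [hs]
    have hA : HasDerivAt (fun s' : ℝ => (4 * π / s') ^ ((n:ℝ)/2))
        (((0 * s - 4 * π * 1) / s ^ 2) * ((n:ℝ)/2) * (4 * π / s) ^ ((n:ℝ)/2 - 1)) s :=
      ((hasDerivAt_const s (4*π)).div (hasDerivAt_id s) hs).rpow_const (Or.inl (ne_of_gt hbase))
    have hXexp := ((((hasDerivAt_id s).const_mul (4:ℝ)).inv h4s).mul_const
      ((inner ℝ y y : ℝ))).exp
    have hcurve : HasDerivAt (fun s' : ℝ => ((s'⁻¹ • y : EuclideanSpace ℝ (Fin n)), s'⁻¹))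
        (((-(s^2)⁻¹ • y : EuclideanSpace ℝ (Fin n)), -(s^2)⁻¹)) s :=
      ((hasDerivAt_inv hs).smul_const y).prodMk (hasDerivAt_inv hs)
    have hUc := hUdiff.hasFDerivAt.comp_hasDerivAt s hcurve
    have hvyD := (hA.mul hXexp).mul hUc
    -- Splitting the directional derivative
    have hsplit : fderiv ℝ U ((s⁻¹ • y : EuclideanSpace ℝ (Fin n)), s⁻¹)
        ((-(s^2)⁻¹ • y : EuclideanSpace ℝ (Fin n)), -(s^2)⁻¹)
        = -(s^2)⁻¹ * fderiv ℝ U ((s⁻¹ • y : EuclideanSpace ℝ (Fin n)), s⁻¹)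
            ((y : EuclideanSpace ℝ (Fin n)), (0:ℝ))
          + -(s^2)⁻¹ * fderiv ℝ U ((s⁻¹ • y : EuclideanSpace ℝ (Fin n)), s⁻¹)
            ((0 : EuclideanSpace ℝ (Fin n)), (1:ℝ)) := by
      have hvec : ((-(s^2)⁻¹ • y : EuclideanSpace ℝ (Fin n)), -(s^2)⁻¹)
          = -(s^2)⁻¹ • (((y : EuclideanSpace ℝ (Fin n)), (0:ℝ))
            + ((0 : EuclideanSpace ℝ (Fin n)), (1:ℝ))) := by
        simp [Prod.smul_mk]
      rw [hvec, map_smul, map_add, smul_eq_mul, mul_add]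
    -- Coordinate sums
    have hRsum : (inner ℝ y y : ℝ) = ∑ i, y i * y i := by
      rw [PiLp.inner_apply]; simp only [RCLike.inner_apply, conj_trivial]
    have hy0 : ((y : EuclideanSpace ℝ (Fin n)), (0:ℝ))
        = ∑ i, y i • ((EuclideanSpace.single i 1 : EuclideanSpace ℝ (Fin n)), (0:ℝ)) := by
      refine Prod.ext ?_ ?_ <;>
        simp [Prod.fst_sum, Prod.snd_sum, aux_sum_single]
    have hLY : ∑ i, y i * fderiv ℝ U ((s⁻¹ • y : EuclideanSpace ℝ (Fin n)), s⁻¹)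
          ((EuclideanSpace.single i 1 : EuclideanSpace ℝ (Fin n)), (0:ℝ))
        = fderiv ℝ U ((s⁻¹ • y : EuclideanSpace ℝ (Fin n)), s⁻¹)
          ((y : EuclideanSpace ℝ (Fin n)), (0:ℝ)) := by
      rw [hy0, map_sum]
      exact Finset.sum_congr rfl fun i _ => by rw [map_smul, smul_eq_mul]
    -- Assemble
    simp only [Function.comp_def, id_eq, Pi.mul_def, Pi.inv_apply] at hvyD
    rw [hvy] at *
    rw [hvyD.deriv, hlap]
    rw [hsplit, Real.rpow_sub hbase, Real.rpow_one]
    set P : ℝ := (4 * π / s) ^ ((n:ℝ)/2) with hPdef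
    set X : ℝ := Real.exp ((4*s)⁻¹ * (inner ℝ y y : ℝ)) with hXdef
    set W : ℝ := U ((s⁻¹ • y : EuclideanSpace ℝ (Fin n)), s⁻¹) with hWdef
    set R : ℝ := (inner ℝ y y : ℝ) with hRdef
    set LY : ℝ := fderiv ℝ U ((s⁻¹ • y : EuclideanSpace ℝ (Fin n)), s⁻¹)
      ((y : EuclideanSpace ℝ (Fin n)), (0:ℝ)) with hLYdef
    set LT : ℝ := fderiv ℝ U ((s⁻¹ • y : EuclideanSpace ℝ (Fin n)), s⁻¹)
      ((0 : EuclideanSpace ℝ (Fin n)), (1:ℝ)) with hLTdef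
    have hsum : (∑ i : Fin n,
        P * X * (((2 * s)⁻¹ + (2 * s)⁻¹ * y i * ((2 * s)⁻¹ * y i)) * W +
            s⁻¹ * (s⁻¹ * y i) * fderiv ℝ U ((s⁻¹ • y : EuclideanSpace ℝ (Fin n)), s⁻¹)
              ((EuclideanSpace.single i 1 : EuclideanSpace ℝ (Fin n)), (0:ℝ)) +
          s⁻¹ * s⁻¹ * fderiv ℝ (fun p => fderiv ℝ U p
              ((EuclideanSpace.single i 1 : EuclideanSpace ℝ (Fin n)), (0:ℝ)))
            ((s⁻¹ • y : EuclideanSpace ℝ (Fin n)), s⁻¹)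
            ((EuclideanSpace.single i 1 : EuclideanSpace ℝ (Fin n)), (0:ℝ))))
      = (n:ℝ) * (P * X * (2*s)⁻¹ * W) + P * X * ((2*s)⁻¹*(2*s)⁻¹) * W * R
        + P * X * (s⁻¹*s⁻¹) * LY + P * X * (s⁻¹*s⁻¹) * LT := by
      have step1 : (∑ i : Fin n,
          P * X * (((2 * s)⁻¹ + (2 * s)⁻¹ * y i * ((2 * s)⁻¹ * y i)) * W +
              s⁻¹ * (s⁻¹ * y i) * fderiv ℝ U ((s⁻¹ • y : EuclideanSpace ℝ (Fin n)), s⁻¹)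
                ((EuclideanSpace.single i 1 : EuclideanSpace ℝ (Fin n)), (0:ℝ)) +
            s⁻¹ * s⁻¹ * fderiv ℝ (fun p => fderiv ℝ U p
                ((EuclideanSpace.single i 1 : EuclideanSpace ℝ (Fin n)), (0:ℝ)))
              ((s⁻¹ • y : EuclideanSpace ℝ (Fin n)), s⁻¹)
              ((EuclideanSpace.single i 1 : EuclideanSpace ℝ (Fin n)), (0:ℝ))))
        = ∑ i : Fin n, ((P * X * (2*s)⁻¹ * W)
            + (P * X * ((2*s)⁻¹*(2*s)⁻¹) * W) * (y i * y i)
            + (P * X * (s⁻¹*s⁻¹)) * (y i * fderiv ℝ U ((s⁻¹ • y : EuclideanSpace ℝ (Fin n)), s⁻¹)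
                ((EuclideanSpace.single i 1 : EuclideanSpace ℝ (Fin n)), (0:ℝ)))
            + (P * X * (s⁻¹*s⁻¹)) * (fderiv ℝ (fun p => fderiv ℝ U p
                  ((EuclideanSpace.single i 1 : EuclideanSpace ℝ (Fin n)), (0:ℝ)))
                ((s⁻¹ • y : EuclideanSpace ℝ (Fin n)), s⁻¹)
                ((EuclideanSpace.single i 1 : EuclideanSpace ℝ (Fin n)), (0:ℝ)))) :=
        Finset.sum_congr rfl fun i _ => by ring
      rw [step1, Finset.sum_add_distrib, Finset.sum_add_distrib, Finset.sum_add_distrib,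
        Finset.sum_const, ← Finset.mul_sum, ← Finset.mul_sum, ← Finset.mul_sum,
        hLY, ← hRsum, ← hheat]
      simp [nsmul_eq_mul]
    rw [hsum]
    field_simp
    ring
end

section
/- Let A > 0, α > 2, and let v(y,s) = Re[ (1/s) · exp( −A (y₁+iy₂)^α / s^α + |y|²/(4s) ) ] (principal branch). Then: (i) for every δ ∈ (0, π/(2α)) there exist R > 0 and C > 0 such that |v(y,s)| ≤ C for all s ∈ (0,1] and all y ∈ ℝ² with |arg(y₁+iy₂)| ≤ π/(2α) − δ and |y| ≥ R; and (ii) for every y ∈ ℝ² with y₁+iy₂ ≠ 0 and |arg(y₁+iy₂)| < π/(2α), one has v(y,s) → 0 as s → 0⁺. -/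
open Real Set Filter

/-- Escauriaza's function
`v(y,s) = Re[(1/s) exp(-A z^α / s^α + |y|²/(4s))]`, `z = y₁ + i y₂`,
with the principal branch of `z^α`. -/
noncomputable def escV (A α y₁ y₂ s : ℝ) : ℝ :=
  ((1 / (s : ℂ)) * Complex.exp
      (-(A : ℂ) * ((y₁ : ℂ) + (y₂ : ℂ) * Complex.I) ^ (α : ℂ) / ((s ^ α : ℝ) : ℂ)
        + (((y₁ ^ 2 + y₂ ^ 2) / (4 * s) : ℝ) : ℂ))).re

/-! With `z = y₁ + i y₂`, `|v(y,s)| ≤ s⁻¹ exp(-A Re(z^α)/s^α + |y|²/(4s))`, and the exponent is at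
most `-1/s` as soon as `(|y|²/4 + 1) s^(α-1) ≤ A Re(z^α)`; then `|v| ≤ s⁻¹ e^(-1/s)`, which is at
most `1` and tends to `0` as `s → 0⁺`. On the subsector, `Re(z^α) = |z|^α cos(α arg z)` is at least
`sin(αδ) |z|^α`, which beats `|y|²/4 + 1` for large `|y|` because `α > 2`; at a fixed point of the
open sector, `Re(z^α) > 0` while `s^(α-1) → 0`. -/

open Topology

lemma sin_mul_rpow_le_re_cpow {z : ℂ} {α δ : ℝ} (hα : 0 < α) (hδ : 0 ≤ δ)
    (harg : |z.arg| ≤ π / (2 * α) - δ) : sin (α * δ) * ‖z‖ ^ α ≤ (z ^ (α : ℂ)).re := by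
  have hαθ : |z.arg * α| ≤ π / 2 - α * δ := by
    rw [abs_mul, abs_of_pos hα]
    calc |z.arg| * α ≤ (π / (2 * α) - δ) * α := by gcongr
      _ = π / 2 - α * δ := by field_simp
  have hcos : sin (α * δ) ≤ cos (z.arg * α) := by
    rw [← cos_pi_div_two_sub, ← cos_abs (z.arg * α)]
    exact cos_le_cos_of_nonneg_of_le_pi (abs_nonneg _) (by nlinarith [pi_pos]) hαθ
  rw [Complex.cpow_ofReal_re, mul_comm]
  gcongr

lemma re_cpow_pos {z : ℂ} {α : ℝ} (hz : z ≠ 0) (hα : 0 < α)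
    (harg : |z.arg| < π / (2 * α)) : 0 < (z ^ (α : ℂ)).re := by
  have hαθ : |z.arg * α| < π / 2 := by
    rw [abs_mul, abs_of_pos hα]
    calc |z.arg| * α < π / (2 * α) * α := by gcongr
      _ = π / 2 := by field_simp
  rw [Complex.cpow_ofReal_re]
  exact mul_pos (rpow_pos_of_pos (norm_pos_iff.2 hz) α)
    (cos_pos_of_mem_Ioo (abs_lt.1 hαθ))

lemma eventually_sq_div_four_add_one_le_mul_rpow {a α : ℝ} (ha : 0 < a) (hα : 2 < α) :
    ∀ᶠ r in atTop, r ^ 2 / 4 + 1 ≤ a * r ^ α := by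
  filter_upwards [eventually_ge_atTop 1,
    (tendsto_rpow_atTop (sub_pos.2 hα)).eventually_ge_atTop (5 / (4 * a))] with r hr hpow
  have hsplit : r ^ α = r ^ (α - 2) * r ^ 2 := by
    rw [← rpow_natCast, ← rpow_add (by linarith)]
    norm_num
  calc r ^ 2 / 4 + 1 ≤ a * (5 / (4 * a)) * r ^ 2 := by
        rw [show a * (5 / (4 * a)) = 5 / 4 by field_simp]
        nlinarith
    _ ≤ a * r ^ (α - 2) * r ^ 2 := by gcongr
    _ = a * r ^ α := by rw [hsplit, mul_assoc]

lemma neg_div_rpow_add_div_le_neg_inv {K D α s : ℝ} (hs : 0 < s)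
    (h : (D / 4 + 1) * s ^ (α - 1) ≤ K) : -K / s ^ α + D / (4 * s) ≤ -s⁻¹ := by
  have hsplit : s ^ α = s ^ (α - 1) * s := by
    rw [← rpow_add_one hs.ne', sub_add_cancel]
  have hpos : 0 < s ^ (α - 1) := rpow_pos_of_pos hs _
  have hK : D / 4 + 1 ≤ K / s ^ (α - 1) := (le_div_iff₀ hpos).2 h
  calc -K / s ^ α + D / (4 * s) = (D / 4 - K / s ^ (α - 1)) / s := by
        rw [hsplit]; field_simp; ring
    _ ≤ -1 / s := by gcongr; linarith
    _ = -s⁻¹ := by ring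

lemma re_escV_exponent (A α y₁ y₂ s : ℝ) :
    (-(A : ℂ) * ((y₁ : ℂ) + (y₂ : ℂ) * Complex.I) ^ (α : ℂ) / ((s ^ α : ℝ) : ℂ)
        + (((y₁ ^ 2 + y₂ ^ 2) / (4 * s) : ℝ) : ℂ)).re
      = -(A * (((y₁ : ℂ) + (y₂ : ℂ) * Complex.I) ^ (α : ℂ)).re) / s ^ α
        + (y₁ ^ 2 + y₂ ^ 2) / (4 * s) := by
  simp only [Complex.add_re, Complex.div_ofReal_re, neg_mul, Complex.neg_re,
    Complex.re_ofReal_mul, Complex.ofReal_re]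

lemma abs_escV_le (A α y₁ y₂ : ℝ) {s : ℝ} (hs : 0 < s) :
    |escV A α y₁ y₂ s| ≤ s⁻¹ * exp (-(A * (((y₁ : ℂ) + (y₂ : ℂ) * Complex.I) ^ (α : ℂ)).re)
      / s ^ α + (y₁ ^ 2 + y₂ ^ 2) / (4 * s)) := by
  refine (Complex.abs_re_le_norm _).trans ?_
  rw [norm_mul, Complex.norm_exp, re_escV_exponent, one_div, norm_inv, Complex.norm_real,
    norm_of_nonneg hs.le]

lemma abs_escV_le_inv_mul_exp_neg_inv {A α y₁ y₂ s : ℝ} (hs : 0 < s)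
    (h : ((y₁ ^ 2 + y₂ ^ 2) / 4 + 1) * s ^ (α - 1)
      ≤ A * (((y₁ : ℂ) + (y₂ : ℂ) * Complex.I) ^ (α : ℂ)).re) :
    |escV A α y₁ y₂ s| ≤ s⁻¹ * exp (-s⁻¹) :=
  (abs_escV_le A α y₁ y₂ hs).trans <| by
    gcongr
    exact neg_div_rpow_add_div_le_neg_inv hs h

lemma abs_escV_le_one {A α y₁ y₂ s : ℝ} (hα : 1 ≤ α) (hs : s ∈ Ioc 0 1)
    (h : (y₁ ^ 2 + y₂ ^ 2) / 4 + 1 ≤ A * (((y₁ : ℂ) + (y₂ : ℂ) * Complex.I) ^ (α : ℂ)).re) :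
    |escV A α y₁ y₂ s| ≤ 1 := by
  have hsα : s ^ (α - 1) ≤ 1 := rpow_le_one hs.1.le hs.2 (by linarith)
  refine (abs_escV_le_inv_mul_exp_neg_inv hs.1 ?_).trans ?_
  · nlinarith [sq_nonneg y₁, sq_nonneg y₂]
  · calc s⁻¹ * exp (-s⁻¹) ≤ exp s⁻¹ * exp (-s⁻¹) := by
          gcongr
          linarith [add_one_le_exp s⁻¹]
      _ = 1 := by rw [← exp_add, add_neg_cancel, exp_zero]

lemma tendsto_escV_nhdsGT_zero {A α y₁ y₂ : ℝ} (hα : 1 < α)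
    (h : 0 < A * (((y₁ : ℂ) + (y₂ : ℂ) * Complex.I) ^ (α : ℂ)).re) :
    Tendsto (fun s => escV A α y₁ y₂ s) (𝓝[>] 0) (𝓝 0) := by
  have hpow : Tendsto (fun s : ℝ => s ^ (α - 1)) (𝓝[>] 0) (𝓝 0) := by
    have := (continuousAt_rpow_const 0 (α - 1) (Or.inr (by linarith))).tendsto
    rw [zero_rpow (by linarith)] at this
    exact this.mono_left nhdsWithin_le_nhds
  have hsmall := hpow.eventually (gt_mem_nhds (div_pos h (by positivity :
    (0 : ℝ) < (y₁ ^ 2 + y₂ ^ 2) / 4 + 1)))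
  have hdecay : Tendsto (fun s : ℝ => s⁻¹ ^ 1 * exp (-s⁻¹)) (𝓝[>] 0) (𝓝 0) :=
    (tendsto_pow_mul_exp_neg_atTop_nhds_zero 1).comp tendsto_inv_nhdsGT_zero
  refine squeeze_zero_norm' ?_ (by simpa only [pow_one] using hdecay)
  filter_upwards [hsmall, self_mem_nhdsWithin] with s hs hs0
  rw [norm_eq_abs]
  refine abs_escV_le_inv_mul_exp_neg_inv hs0 ?_
  rw [lt_div_iff₀' (by positivity)] at hs
  exact hs.le

/-- (i) `v` is bounded for `s ∈ (0,1]` on each strict subsector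
`|arg z| ≤ π/(2α) - δ`, `|y| ≥ R`, and (ii) `v(y,s) → 0` as `s → 0⁺` at every
point of the open sector `|arg z| < π/(2α)`. -/
theorem escV_bounded_and_decays (A α : ℝ) (hA : 0 < A) (hα : 2 < α) :
    (∀ δ : ℝ, 0 < δ → δ < π / (2 * α) →
      ∃ R : ℝ, 0 < R ∧ ∃ C : ℝ, 0 < C ∧
        ∀ s ∈ Set.Ioc (0 : ℝ) 1, ∀ y₁ y₂ : ℝ,
          |Complex.arg ((y₁ : ℂ) + (y₂ : ℂ) * Complex.I)| ≤ π / (2 * α) - δ →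
          R ≤ Real.sqrt (y₁ ^ 2 + y₂ ^ 2) →
          |escV A α y₁ y₂ s| ≤ C) ∧
    (∀ y₁ y₂ : ℝ, ((y₁ : ℂ) + (y₂ : ℂ) * Complex.I) ≠ 0 →
      |Complex.arg ((y₁ : ℂ) + (y₂ : ℂ) * Complex.I)| < π / (2 * α) →
      Filter.Tendsto (fun s => escV A α y₁ y₂ s)
        (nhdsWithin 0 (Set.Ioi 0)) (nhds 0)) := by
  have hα0 : 0 < α := by linarith
  refine ⟨fun δ hδ hδα => ?_, fun y₁ y₂ hz harg =>
    tendsto_escV_nhdsGT_zero (by linarith) (mul_pos hA (re_cpow_pos hz hα0 harg))⟩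
  have hαδ : α * δ < π / 2 := by
    rw [lt_div_iff₀ (by positivity)] at hδα
    linarith
  have hsin : 0 < sin (α * δ) := sin_pos_of_pos_of_lt_pi (by positivity) (by linarith [pi_pos])
  obtain ⟨R, hR⟩ := eventually_atTop.1
    (eventually_sq_div_four_add_one_le_mul_rpow (mul_pos hA hsin) hα)
  refine ⟨max R 1, by positivity, 1, one_pos,
    fun s hs y₁ y₂ harg hr => abs_escV_le_one (by linarith) hs ?_⟩
  calc (y₁ ^ 2 + y₂ ^ 2) / 4 + 1 = √(y₁ ^ 2 + y₂ ^ 2) ^ 2 / 4 + 1 := by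
        rw [sq_sqrt (by positivity)]
    _ ≤ A * sin (α * δ) * √(y₁ ^ 2 + y₂ ^ 2) ^ α := hR _ (le_of_max_le_left hr)
    _ ≤ A * (((y₁ : ℂ) + (y₂ : ℂ) * Complex.I) ^ (α : ℂ)).re := by
        rw [mul_assoc, ← Complex.norm_add_mul_I y₁ y₂]
        gcongr
        exact sin_mul_rpow_le_re_cpow hα0 hδ.le harg
end

section
/- Let n ≥ 1, α ∈ (1,2), ε ∈ (0,1), and let φ̃(x) = x₁^α − ε^α |x|^α on ℝⁿ. Then for every x ∈ ℝⁿ with x₁ > 0, the matrix D²φ̃(x) + α ε^α |x|^{α−2} Iₙ is positive semidefinite, where Iₙ is the n×n identity matrix. Explicitly, D²φ̃(x) = α(α−1)x₁^{α−2} e₁e₁ᵀ − α ε^α |x|^{α−2} Iₙ + α(2−α) ε^α |x|^{α−4} x xᵀ, and the sum of the first and third terms is positive semidefinite. -/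
open Real Set

/-- The weight `φ̃(x) = x₁^α - ε^α |x|^α`. -/
noncomputable def phit {n : ℕ} [NeZero n] (α ε : ℝ)
    (x : EuclideanSpace ℝ (Fin n)) : ℝ :=
  x 0 ^ α - ε ^ α * ‖x‖ ^ α

/-- The Hessian matrix of `f` at `x`: `(i, j) ↦ ∂ᵢ∂ⱼ f (x)`. -/
noncomputable def hess {n : ℕ} (f : EuclideanSpace ℝ (Fin n) → ℝ)
    (x : EuclideanSpace ℝ (Fin n)) : Matrix (Fin n) (Fin n) ℝ :=
  Matrix.of fun i j =>
    fderiv ℝ (fun y => fderiv ℝ f y (EuclideanSpace.single j 1)) x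
      (EuclideanSpace.single i 1)

/-!
Where `x₁ > 0` (hence `x ≠ 0`), `φ̃` is differentiable near `x` with
`∂ⱼφ̃(y) = α y₁^{α-1} δ₁ⱼ - α ε^α |y|^{α-2} yⱼ`; differentiating once more gives the Hessian.
Adding `α ε^α |x|^{α-2} Iₙ` leaves `c₁ e₁e₁ᵀ + c₂ x xᵀ` with `c₁ = α(α-1)x₁^{α-2} ≥ 0` and
`c₂ = α(2-α)ε^α|x|^{α-4} ≥ 0` because `1 < α < 2`: a nonnegative combination of Gram matrices.
-/

open scoped Topology

theorem hasFDerivAt_norm_rpow_of_ne_zero {E : Type*} [NormedAddCommGroup E]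
    [InnerProductSpace ℝ E] {x : E} (hx : x ≠ 0) (p : ℝ) :
    HasFDerivAt (fun y : E ↦ ‖y‖ ^ p) ((p * ‖x‖ ^ (p - 2)) • innerSL ℝ x) x := by
  apply HasStrictFDerivAt.hasFDerivAt
  convert (hasStrictFDerivAt_norm_sq x).rpow_const (p := p / 2) (Or.inl (by simp [hx])) using 0
  simp_rw [← Real.rpow_natCast_mul (norm_nonneg _), ← Nat.cast_smul_eq_nsmul ℝ, smul_smul]
  ring_nf

theorem hasFDerivAt_apply_rpow {ι : Type*} [Fintype ι] {y : EuclideanSpace ℝ ι} {k : ι}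
    (hy : 0 < y k) (p : ℝ) :
    HasFDerivAt (fun z : EuclideanSpace ℝ ι ↦ z k ^ p)
      ((p * y k ^ (p - 1)) • EuclideanSpace.proj (𝕜 := ℝ) k) y := by
  simpa [Function.comp_def] using
    (Real.hasDerivAt_rpow_const (p := p) (Or.inl hy.ne')).comp_hasFDerivAt y
      (EuclideanSpace.proj (𝕜 := ℝ) k).hasFDerivAt

theorem hess_apply_of_eventuallyEq {n : ℕ} {f g : EuclideanSpace ℝ (Fin n) → ℝ}
    {g' : EuclideanSpace ℝ (Fin n) →L[ℝ] ℝ} {x : EuclideanSpace ℝ (Fin n)} {i j : Fin n}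
    (hfg : (fun y ↦ fderiv ℝ f y (EuclideanSpace.single j 1)) =ᶠ[𝓝 x] g)
    (hg : HasFDerivAt g g' x) :
    hess f x i j = g' (EuclideanSpace.single i 1) := by
  rw [hess, Matrix.of_apply, hfg.fderiv_eq, hg.fderiv]

section phit

variable {n : ℕ} [NeZero n] (α ε : ℝ)

theorem hasFDerivAt_phit {y : EuclideanSpace ℝ (Fin n)} (hy : 0 < y 0) :
    HasFDerivAt (phit α ε)
      ((α * y 0 ^ (α - 1)) • EuclideanSpace.proj 0
        - (α * (ε ^ α * ‖y‖ ^ (α - 2))) • innerSL ℝ y) y := by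
  have hy0 : y ≠ 0 := fun h ↦ by simp [h] at hy
  have h := (hasFDerivAt_apply_rpow hy α).sub
    ((hasFDerivAt_norm_rpow_of_ne_zero hy0 α).const_mul (ε ^ α))
  rwa [smul_smul, mul_left_comm] at h

theorem fderiv_phit_apply_single {y : EuclideanSpace ℝ (Fin n)} (hy : 0 < y 0) (j : Fin n) :
    fderiv ℝ (phit α ε) y (EuclideanSpace.single j 1) =
      α * Pi.single (M := fun _ ↦ ℝ) 0 1 j * y 0 ^ (α - 1)
        - α * ε ^ α * (‖y‖ ^ (α - 2) * y j) := by
  simp [(hasFDerivAt_phit α ε hy).fderiv, EuclideanSpace.inner_single_right, Pi.single_apply,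
    eq_comm (a := (0 : Fin n))]
  ring

theorem hess_phit {x : EuclideanSpace ℝ (Fin n)} (hx : 0 < x 0) :
    hess (phit α ε) x =
      (α * (α - 1) * x 0 ^ (α - 2)) • Matrix.single 0 0 1
        - (α * ε ^ α * ‖x‖ ^ (α - 2)) • 1
        + (α * (2 - α) * ε ^ α * ‖x‖ ^ (α - 4)) •
            Matrix.vecMulVec (fun i ↦ x i) (fun i ↦ x i) := by
  have hx0 : x ≠ 0 := fun h ↦ by simp [h] at hx
  have hpartial (j : Fin n) : (fun y ↦ fderiv ℝ (phit α ε) y (EuclideanSpace.single j 1)) =ᶠ[𝓝 x]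
      fun y ↦ α * Pi.single (M := fun _ ↦ ℝ) 0 1 j * y 0 ^ (α - 1)
        - α * ε ^ α * (‖y‖ ^ (α - 2) * y j) := by
    have hx_nhds : ∀ᶠ y in 𝓝 x, 0 < y 0 :=
      (EuclideanSpace.proj (𝕜 := ℝ) (0 : Fin n)).continuous.continuousAt.eventually_const_lt hx
    filter_upwards [hx_nhds] with y hy using fderiv_phit_apply_single α ε hy j
  ext i j
  rw [hess_apply_of_eventuallyEq (hpartial j)
    (((hasFDerivAt_apply_rpow hx (α - 1)).const_mul _).sub
      (((hasFDerivAt_norm_rpow_of_ne_zero hx0 (α - 2)).mul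
        (EuclideanSpace.proj (𝕜 := ℝ) j).hasFDerivAt).const_mul _))]
  rw [show α - 1 - 1 = α - 2 by ring, show α - 2 - 2 = α - 4 by ring]
  by_cases hij : i = j <;> by_cases hj : j = 0 <;>
    simp [hij, hj, Matrix.single_apply, Matrix.one_apply, Matrix.vecMulVec_apply,
      EuclideanSpace.inner_single_right, eq_comm (a := (0 : Fin n))] <;> ring_nf

end phit

theorem hessian_psd_general (n : ℕ) [NeZero n] (α ε : ℝ)
    (hα : α ∈ Set.Ioo (1 : ℝ) 2) (hε : ε ∈ Set.Ioo (0 : ℝ) 1)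
    (x : EuclideanSpace ℝ (Fin n)) (hx : 0 < x 0) :
    hess (phit α ε) x =
        (α * (α - 1) * x 0 ^ (α - 2)) •
            Matrix.single (0 : Fin n) (0 : Fin n) (1 : ℝ)
          - (α * ε ^ α * ‖x‖ ^ (α - 2)) • (1 : Matrix (Fin n) (Fin n) ℝ)
          + (α * (2 - α) * ε ^ α * ‖x‖ ^ (α - 4)) •
              Matrix.vecMulVec (fun i => x i) (fun i => x i) ∧
      ((α * (α - 1) * x 0 ^ (α - 2)) •
            Matrix.single (0 : Fin n) (0 : Fin n) (1 : ℝ)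
          + (α * (2 - α) * ε ^ α * ‖x‖ ^ (α - 4)) •
              Matrix.vecMulVec (fun i => x i) (fun i => x i)).PosSemidef ∧
      (hess (phit α ε) x +
          (α * ε ^ α * ‖x‖ ^ (α - 2)) • (1 : Matrix (Fin n) (Fin n) ℝ)).PosSemidef := by
  obtain ⟨hα1, hα2⟩ := hα
  have hc1 : 0 ≤ α * (α - 1) * x 0 ^ (α - 2) :=
    mul_nonneg (by nlinarith) (Real.rpow_nonneg hx.le _)
  have hc3 : 0 ≤ α * (2 - α) * ε ^ α * ‖x‖ ^ (α - 4) :=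
    mul_nonneg (mul_nonneg (by nlinarith) (Real.rpow_nonneg hε.1.le α))
      (Real.rpow_nonneg (norm_nonneg x) _)
  have hpsd : ((α * (α - 1) * x 0 ^ (α - 2)) • Matrix.single (0 : Fin n) 0 (1 : ℝ)
      + (α * (2 - α) * ε ^ α * ‖x‖ ^ (α - 4)) •
          Matrix.vecMulVec (fun i => x i) (fun i => x i)).PosSemidef := by
    rw [Matrix.single_eq_single_vecMulVec_single]
    simpa using ((Matrix.posSemidef_vecMulVec_self_star _).smul hc1).add
      ((Matrix.posSemidef_vecMulVec_self_star fun i ↦ x i).smul hc3)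
  refine ⟨hess_phit α ε hx, hpsd, ?_⟩
  convert hpsd using 1
  rw [hess_phit α ε hx]
  abel

/-- The Hessian of `φ̃(x) = x₁^α - ε^α |x|^α` equals
`α(α-1) x₁^{α-2} e₁e₁ᵀ - α ε^α |x|^{α-2} Iₙ + α(2-α) ε^α |x|^{α-4} x xᵀ`;
the sum of the first and third terms is positive semidefinite, and consequently
`D²φ̃(x) + α ε^α |x|^{α-2} Iₙ` is positive semidefinite. -/
theorem hessian_psd (n : ℕ) [NeZero n] (hn : 1 ≤ n) (α ε : ℝ)
    (hα : α ∈ Set.Ioo (1 : ℝ) 2) (hε : ε ∈ Set.Ioo (0 : ℝ) 1)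
    (x : EuclideanSpace ℝ (Fin n)) (hx : 0 < x 0) :
    hess (phit α ε) x =
        (α * (α - 1) * x 0 ^ (α - 2)) •
            Matrix.single (0 : Fin n) (0 : Fin n) (1 : ℝ)
          - (α * ε ^ α * ‖x‖ ^ (α - 2)) • (1 : Matrix (Fin n) (Fin n) ℝ)
          + (α * (2 - α) * ε ^ α * ‖x‖ ^ (α - 4)) •
              Matrix.vecMulVec (fun i => x i) (fun i => x i) ∧
      ((α * (α - 1) * x 0 ^ (α - 2)) •
            Matrix.single (0 : Fin n) (0 : Fin n) (1 : ℝ)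
          + (α * (2 - α) * ε ^ α * ‖x‖ ^ (α - 4)) •
              Matrix.vecMulVec (fun i => x i) (fun i => x i)).PosSemidef ∧
      (hess (phit α ε) x +
          (α * ε ^ α * ‖x‖ ^ (α - 2)) • (1 : Matrix (Fin n) (Fin n) ℝ)).PosSemidef :=
  hessian_psd_general n α ε hα hε x hx
end

section
/- Define m(α, ε) = (α − 1 − 2ε^α)(1 − ε^α)² − 2ε^{α+2}(1 − ε²). Then m(2, 1/√3) = 0; moreover, on the rectangle (α, ε) ∈ (1,2) × (0, 1/√3), the function m is monotone increasing in α for each fixed ε and monotone decreasing in ε for each fixed α. -/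
/-!
Write `t = ε ^ α ∈ [0, ε]`. Differentiating in `α` gives
`∂_α m = (1 - t)² + 2c · ((1 - t)(α - 3t) + ε²(1 - ε²))` with `c = -t log ε`, which is affine in
`c`; since `0 ≤ c ≤ -ε log ε ≤ 1 - ε`, its sign is that of a polynomial in `t, ε` at the two
endpoints `c = 0` and `c = 1 - ε`. Differentiating in `ε` gives
`∂_ε m = -2 ε^(α-1) (α(1 - t)(α - 3t) + (α + 2)ε² - (α + 4)ε⁴)`, whose bracket decreases in `t`
and so is smallest at `t = ε`.
-/

open Real Set

/-- The quantity `m(α, ε) = (α - 1 - 2ε^α)(1 - ε^α)² - 2ε^{α+2}(1 - ε²)`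
controlling the positivity of the leading term in the Carleman estimate. -/
noncomputable def mfun (α ε : ℝ) : ℝ :=
  (α - 1 - 2 * ε ^ α) * (1 - ε ^ α) ^ 2 - 2 * ε ^ (α + 2) * (1 - ε ^ 2)

lemma add_mul_nonneg_of_le_of_nonneg {a b c C : ℝ} (ha : 0 ≤ a) (hC : 0 ≤ a + C * b)
    (hc : 0 ≤ c) (hcC : c ≤ C) : 0 ≤ a + c * b := by
  rcases le_total 0 b with hb | hb
  · positivity
  · nlinarith [mul_le_mul_of_nonpos_right hcC hb]

lemma sq_le_one_third_of_le_inv_sqrt_three {ε : ℝ} (h0 : 0 ≤ ε) (h : ε ≤ 1 / √3) :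
    ε ^ 2 ≤ 1 / 3 := by
  calc ε ^ 2 ≤ (1 / √3) ^ 2 := pow_le_pow_left₀ h0 h 2
    _ = 1 / 3 := by rw [div_pow, one_pow, sq_sqrt (by norm_num)]

-- In the two polynomial bounds below `t` stands for `ε ^ α`, which lies in `[0, ε]`.
lemma mfun_deriv_fst_poly_nonneg {α t ε : ℝ} (hα : 1 ≤ α) (ht : 0 ≤ t) (htε : t ≤ ε)
    (hε : ε ^ 2 ≤ 1 / 3) :
    0 ≤ (1 - t) ^ 2 + 2 * (1 - ε) * ((1 - t) * (α - 3 * t) + ε ^ 2 * (1 - ε ^ 2)) := by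
  have hε1 : ε < 1 := by nlinarith
  nlinarith [sq_nonneg (ε - t), sq_nonneg (1 - 3 * ε ^ 2), sq_nonneg t, sq_nonneg ε,
    sq_nonneg (t - 1 / 2), sq_nonneg (ε - 1 / 2), mul_nonneg ht (sub_nonneg.2 htε),
    sq_nonneg (t * ε), mul_nonneg (mul_nonneg (sub_nonneg.2 hα) (sub_nonneg.2 hε1.le))
      (by linarith : (0 : ℝ) ≤ 1 - t)]

lemma mfun_deriv_snd_poly_nonneg {α t ε : ℝ} (hα : 1 ≤ α) (ht : 0 ≤ t) (htε : t ≤ ε)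
    (hε : ε ^ 2 ≤ 1 / 3) :
    0 ≤ α * (1 - t) * (α - 3 * t) + (α + 2) * ε ^ 2 - (α + 4) * ε ^ 4 := by
  have hε0 : 0 ≤ ε := ht.trans htε
  have h_at_eps : 0 ≤ α * (1 - ε) * (α - 3 * ε) + (α + 2) * ε ^ 2 - (α + 4) * ε ^ 4 := by
    nlinarith [sq_nonneg (α - 2 * ε), sq_nonneg (α - 1 - ε), mul_nonneg (sub_nonneg.2 hα) hε0,
      mul_nonneg (mul_nonneg hε0 hε0) (sub_nonneg.2 hε)]
  -- `t ↦ α (1 - t) (α - 3t)` decreases on `[0, (α + 3) / 6] ⊇ [0, ε]`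
  have h6 : 6 * ε ≤ α + 3 := by nlinarith [sq_nonneg (6 * ε - 4)]
  nlinarith [mul_nonneg (mul_nonneg (by linarith : (0 : ℝ) ≤ α) (sub_nonneg.2 htε))
    (by linarith : 0 ≤ (α + 3) - 3 * (t + ε))]

lemma hasDerivAt_mfun_fst {ε : ℝ} (hε : 0 < ε) (α : ℝ) :
    HasDerivAt (fun a => mfun a ε) ((1 - ε ^ α) ^ 2 + 2 * -(ε ^ α * log ε) *
      ((1 - ε ^ α) * (α - 3 * ε ^ α) + ε ^ 2 * (1 - ε ^ 2))) α := by
  have hpow (a : ℝ) : HasDerivAt (fun a : ℝ => ε ^ a) (ε ^ a * log ε) a :=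
    (hasStrictDerivAt_const_rpow hε a).hasDerivAt
  have h := ((((hasDerivAt_id α).sub_const 1).sub ((hpow α).const_mul 2)).mul
    (((hpow α).const_sub 1).pow 2)).sub
    ((((hpow (α + 2)).comp α ((hasDerivAt_id α).add_const 2)).const_mul 2).mul_const (1 - ε ^ 2))
  refine h.congr_deriv ?_
  rw [rpow_add hε, rpow_two]
  simp only [Pi.pow_apply, id_eq, Pi.sub_apply, Nat.cast_ofNat, Nat.add_one_sub_one, pow_one,
    mul_neg, mul_one, neg_mul]
  ring

lemma hasDerivAt_mfun_snd (α : ℝ) {ε : ℝ} (hε : 0 < ε) :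
    HasDerivAt (fun e => mfun α e) (-2 * ε ^ (α - 1) *
      (α * (1 - ε ^ α) * (α - 3 * ε ^ α) + (α + 2) * ε ^ 2 - (α + 4) * ε ^ 4)) ε := by
  have hpow (a : ℝ) : HasDerivAt (fun e : ℝ => e ^ a) (a * ε ^ (a - 1)) ε :=
    hasDerivAt_rpow_const (Or.inl hε.ne')
  have h := (((hpow α).const_mul 2).const_sub (α - 1)).mul (((hpow α).const_sub 1).pow 2) |>.sub
    (((hpow (α + 2)).const_mul 2).mul ((hasDerivAt_pow 2 ε).const_sub 1))
  refine h.congr_deriv ?_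
  have e1 : ε ^ α = ε ^ (α - 1) * ε := by rw [← rpow_add_one hε.ne']; ring_nf
  have e2 : ε ^ (α + 2 - 1) = ε ^ (α - 1) * ε ^ 2 := by
    rw [← rpow_natCast, ← rpow_add hε]; ring_nf
  have e3 : ε ^ (α + 2) = ε ^ (α - 1) * ε ^ 3 := by
    rw [← rpow_natCast, ← rpow_add hε]; ring_nf
  simp only [Pi.pow_apply]
  rw [e3, e2, e1]
  norm_num
  ring

lemma mfun_deriv_fst_nonneg {α ε : ℝ} (hα : 1 ≤ α) (hε0 : 0 < ε) (hε : ε ^ 2 ≤ 1 / 3) :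
    0 ≤ (1 - ε ^ α) ^ 2 + 2 * -(ε ^ α * log ε) *
      ((1 - ε ^ α) * (α - 3 * ε ^ α) + ε ^ 2 * (1 - ε ^ 2)) := by
  have hε1 : ε ≤ 1 := by nlinarith
  have ht0 : 0 ≤ ε ^ α := rpow_nonneg hε0.le α
  have htε : ε ^ α ≤ ε := rpow_le_self_of_le_one hε0.le hε1 hα
  have hlog : 0 ≤ -log ε := neg_nonneg.2 (log_nonpos hε0.le hε1)
  have hc : -(ε ^ α * log ε) ≤ 1 - ε := by
    have := negMulLog_le_one_sub_self hε0.le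
    rw [negMulLog] at this
    nlinarith [mul_le_mul_of_nonneg_right htε hlog]
  exact add_mul_nonneg_of_le_of_nonneg (sq_nonneg _) (mfun_deriv_fst_poly_nonneg hα ht0 htε hε)
    (by nlinarith) (by linarith)

lemma mfun_monotoneOn_fst {ε : ℝ} (hε0 : 0 < ε) (hε : ε ^ 2 ≤ 1 / 3) :
    MonotoneOn (fun α => mfun α ε) (Ici 1) :=
  monotoneOn_of_hasDerivWithinAt_nonneg (convex_Ici 1)
    (fun α _ => (hasDerivAt_mfun_fst hε0 α).continuousAt.continuousWithinAt)
    (fun α _ => (hasDerivAt_mfun_fst hε0 α).hasDerivWithinAt)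
    (fun _ hα => mfun_deriv_fst_nonneg (mem_Ici.1 (interior_subset hα)) hε0 hε)

lemma mfun_antitoneOn_snd {α : ℝ} (hα : 1 ≤ α) :
    AntitoneOn (fun ε => mfun α ε) (Ioc 0 (1 / √3)) := by
  refine antitoneOn_of_hasDerivWithinAt_nonpos (convex_Ioc 0 _)
    (fun ε hε => (hasDerivAt_mfun_snd α hε.1).continuousAt.continuousWithinAt)
    (fun ε hε => (hasDerivAt_mfun_snd α (interior_subset hε).1).hasDerivWithinAt) ?_
  intro ε hε
  rw [interior_Ioc] at hε
  obtain ⟨hε0, hε1⟩ := hε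
  have hε : ε ^ 2 ≤ 1 / 3 := sq_le_one_third_of_le_inv_sqrt_three hε0.le hε1.le
  have hP := mfun_deriv_snd_poly_nonneg hα (rpow_nonneg hε0.le α)
    (rpow_le_self_of_le_one hε0.le (by nlinarith) hα) hε
  have hu := rpow_nonneg hε0.le (α - 1)
  nlinarith [mul_nonneg hu hP]

/-- `m(2, 1/√3) = 0`; moreover on `(1,2) × (0, 1/√3)` the function `m` is
monotone increasing in `α` and monotone decreasing in `ε`. -/
theorem mfun_properties :
    mfun 2 (1 / Real.sqrt 3) = 0 ∧
    (∀ ε ∈ Set.Ioo (0 : ℝ) (1 / Real.sqrt 3),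
      MonotoneOn (fun α => mfun α ε) (Set.Ioo (1 : ℝ) 2)) ∧
    (∀ α ∈ Set.Ioo (1 : ℝ) 2,
      AntitoneOn (fun ε => mfun α ε) (Set.Ioo (0 : ℝ) (1 / Real.sqrt 3))) := by
  refine ⟨?_, fun ε ⟨hε0, hε1⟩ => ?_, fun α ⟨hα, _⟩ => ?_⟩
  · have h : (1 / √3) ^ 2 = (1 / 3 : ℝ) := by rw [div_pow, one_pow, sq_sqrt (by norm_num)]
    rw [mfun, show (2 : ℝ) + 2 = 2 * 2 by norm_num, rpow_mul (by positivity), rpow_two, h]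
    norm_num
  · exact (mfun_monotoneOn_fst hε0 (sq_le_one_third_of_le_inv_sqrt_three hε0.le hε1.le)).mono
      fun _ h => h.1.le
  · exact (mfun_antitoneOn_snd hα.le).mono Ioo_subset_Ioc_self
end

section
/- Define m(α, ε) = (α − 1 − 2ε^α)(1 − ε^α)² − 2ε^{α+2}(1 − ε²). Then for every ε ∈ (0, 1/√3), m(2, ε) = (1 − ε²)(1 − 3ε²) > 0, and there exists α₀ = α₀(ε) ∈ (1,2) such that m(α, ε) > 0 for all α ∈ [α₀, 2]. Conversely, if ε ≥ 1/√3 then m(α, ε) < 0 for all α ∈ (1,2). -/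
open Real Set

lemma mfun_two (ε : ℝ) (_hε : 0 < ε) : mfun 2 ε = (1 - ε ^ 2) * (1 - 3 * ε ^ 2) := by
  have h1 : ε ^ (2 : ℝ) = ε ^ (2 : ℕ) := by
    rw [show (2 : ℝ) = ((2 : ℕ) : ℝ) by norm_num, Real.rpow_natCast]
  have h2 : ε ^ ((2 : ℝ) + 2) = ε ^ (4 : ℕ) := by
    rw [show (2 : ℝ) + 2 = ((4 : ℕ) : ℝ) by norm_num, Real.rpow_natCast]
  simp only [mfun, h1, h2]
  ring

lemma mfun_continuousAt (ε : ℝ) (hε : ε ≠ 0) : ContinuousAt (fun α => mfun α ε) 2 := by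
  have h1 : ContinuousAt (fun α : ℝ => ε ^ α) 2 := Real.continuousAt_const_rpow hε
  have h2 : ContinuousAt (fun α : ℝ => ε ^ (α + 2)) 2 := by
    have := (Real.continuousAt_const_rpow hε (b := (2:ℝ)+2)).comp
      (f := fun α : ℝ => α + 2) (x := (2:ℝ)) (by fun_prop)
    exact this
  unfold mfun
  fun_prop

/-- For `ε ∈ (0, 1/√3)`, `m(2, ε) = (1 - ε²)(1 - 3ε²) > 0` and `m(α, ε) > 0` for
all `α` in some left neighbourhood `[α₀, 2]` of `2` with `α₀ ∈ (1,2)`; conversely,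
for `1/√3 ≤ ε < 1`, `m(α, ε) < 0` for every `α ∈ (1,2)`. -/
theorem mfun_positivity (ε : ℝ) :
    (ε ∈ Set.Ioo (0 : ℝ) (1 / Real.sqrt 3) →
      mfun 2 ε = (1 - ε ^ 2) * (1 - 3 * ε ^ 2) ∧
      0 < mfun 2 ε ∧
      ∃ α₀ ∈ Set.Ioo (1 : ℝ) 2, ∀ α ∈ Set.Icc α₀ (2 : ℝ), 0 < mfun α ε) ∧
    (1 / Real.sqrt 3 ≤ ε → ε < 1 →
      ∀ α ∈ Set.Ioo (1 : ℝ) 2, mfun α ε < 0) := by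
  have h3 : (0:ℝ) < Real.sqrt 3 := Real.sqrt_pos.2 (by norm_num)
  constructor
  · rintro ⟨hε0, hεs⟩
    have hε1 : ε < 1 := lt_of_lt_of_le hεs (by
      rw [div_le_one h3]
      nlinarith [Real.sq_sqrt (by norm_num : (3:ℝ) ≥ 0)])
    have hsq : ε ^ 2 < 1 / 3 := by
      have := mul_self_lt_mul_self hε0.le hεs
      have h33 : (1 / Real.sqrt 3) * (1 / Real.sqrt 3) = 1 / 3 := by
        rw [div_mul_div_comm, one_mul, Real.mul_self_sqrt (by norm_num)]
      nlinarith [this]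
    have heq := mfun_two ε hε0
    have hpos : 0 < mfun 2 ε := by rw [heq]; nlinarith
    refine ⟨heq, hpos, ?_⟩
    have hc := mfun_continuousAt ε hε0.ne'
    have hmem : (fun α => mfun α ε) ⁻¹' Set.Ioi 0 ∈ nhds (2 : ℝ) :=
      hc (isOpen_Ioi.mem_nhds hpos)
    obtain ⟨δ, hδ, hball⟩ := Metric.mem_nhds_iff.mp hmem
    refine ⟨max (2 - δ / 2) (3 / 2), ⟨lt_max_of_lt_right (by norm_num),
      max_lt (by linarith) (by norm_num)⟩, ?_⟩
    intro α ⟨hα1, hα2⟩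
    have hα1' : 2 - δ / 2 ≤ α := le_trans (le_max_left _ _) hα1
    have : α ∈ Metric.ball (2:ℝ) δ := by
      rw [Metric.mem_ball, Real.dist_eq, abs_sub_lt_iff]
      constructor <;> linarith
    exact hball this
  · intro hεs hε1 α ⟨hα1, hα2⟩
    have hε0 : 0 < ε := lt_of_lt_of_le (by positivity) hεs
    set e := ε ^ α with he
    set t := ε ^ 2 with ht
    have hte : t ≤ e := by
      have : ε ^ (2:ℝ) ≤ ε ^ α := Real.rpow_le_rpow_of_exponent_ge hε0 hε1.le hα2.le
      rwa [show (2:ℝ) = ((2:ℕ):ℝ) by norm_num, Real.rpow_natCast] at this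
    have he1 : e < 1 := Real.rpow_lt_one hε0.le hε1 (by linarith)
    have ht13 : 1 / 3 ≤ t := by
      have h1 : 1 / Real.sqrt 3 * (1 / Real.sqrt 3) = 1 / 3 := by
        rw [div_mul_div_comm, one_mul, Real.mul_self_sqrt (by norm_num)]
      have := mul_le_mul hεs hεs (by positivity) hε0.le
      rw [h1] at this
      nlinarith
    have hsplit : ε ^ (α + 2) = e * t := by
      rw [Real.rpow_add hε0, ht, show (2:ℝ) = ((2:ℕ):ℝ) by norm_num, Real.rpow_natCast]
    unfold mfun
    rw [hsplit, ← he, ← ht]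
    nlinarith [sq_nonneg (1 - e), sq_nonneg (e - t), sq_nonneg (3*e - 1), sq_nonneg (3*t - 1),
      mul_pos (sub_pos.2 he1) (sub_pos.2 he1), mul_nonneg (sub_nonneg.2 hte) (sub_nonneg.2 hte)]
end
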